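/- Every nonzero monomial element t^c* of G(m) lying in (0 :_{G(m)} 𝓜^r) has exponent of the form c = ω_i + l g_1 for some index i with a_i > b_i and some integer l ≥ 0. -/

import Mathlib

/-!
Common setup: the numerical semigroup ring `R = k[[t^S]]`, its maximal ideal `m`,
the associated graded ring `G(m)` (realized as the Rees algebra `R[mt]` modulo
the extension of `m`, the standard presentation of `⊕_{h≥0} m^h/m^{h+1}`),
the homogeneous maximal ideal `𝓜`, the reduction number `r`, initial forms
`t^s*`, Apery sets, the invariants `a_i`, `b_i`, `l_i`, the order function,
the partial order `≤_M`, symmetry, `M`-purity, Buchsbaumness and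
Cohen-Macaulayness (via their characterizations `(0:𝓜) = (0:𝓜^r)` and
`(0:𝓜^r) = 0` valid in this one-dimensional graded setting).
-/

set_option maxHeartbeats 1000000
set_option synthInstance.maxHeartbeats 1000000

open scoped Pointwise
open Polynomial

noncomputable section

namespace NumSgrp

/-- The numerical semigroup `S` generated by `g 0 < g 1 < ⋯ < g n`. -/
def S {n : ℕ} (g : Fin (n + 1) → ℕ) : AddSubmonoid ℕ := AddSubmonoid.closure (Set.range g)

/-- `setM g h` is the `h`-fold sumset `M + ⋯ + M` of the maximal ideal
`M = S \ {0}`; by convention `setM g 0 = S` (corresponding to `m^0 = R`). -/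
def setM {n : ℕ} (g : Fin (n + 1) → ℕ) : ℕ → Set ℕ
  | 0 => (S g : Set ℕ)
  | h+1 => ({u : ℕ | u ∈ S g ∧ u ≠ 0} + setM g h : Set ℕ)

/-- `ordS g s` = ord(s) = max { h | s ∈ hM }. -/
def ordS {n : ℕ} (g : Fin (n + 1) → ℕ) (s : ℕ) : ℕ := sSup {h | s ∈ setM g h}

/-- `ap g i` = ω_i, the least element of `S` congruent to `i` modulo `g 0`. -/
def ap {n : ℕ} (g : Fin (n + 1) → ℕ) (i : ℕ) : ℕ := sInf {s | s ∈ S g ∧ s % g 0 = i}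

/-- The Apery set `Ap_{g_1}(S) = {ω_0, …, ω_{g_1-1}}`. -/
def apSet {n : ℕ} (g : Fin (n + 1) → ℕ) : Set ℕ := {s | ∃ i < g 0, s = ap g i}

/-- The blow-up `S' = ⟨g_1, g_2 - g_1, …, g_n - g_1⟩`. -/
def S' {n : ℕ} (g : Fin (n + 1) → ℕ) : AddSubmonoid ℕ :=
  AddSubmonoid.closure (insert (g 0) (Set.range fun i => g i - g 0))

/-- `ap' g i` = ω'_i, the least element of `S'` congruent to `i` modulo `g 0`. -/
def ap' {n : ℕ} (g : Fin (n + 1) → ℕ) (i : ℕ) : ℕ := sInf {s | s ∈ S' g ∧ s % g 0 = i}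

/-- The Apery set `Ap_{g_1}(S') = {ω'_0, …, ω'_{g_1-1}}`. -/
def apSet' {n : ℕ} (g : Fin (n + 1) → ℕ) : Set ℕ := {s | ∃ i < g 0, s = ap' g i}

/-- `aa g i` = a_i, the unique integer with ω_i = ω'_i + a_i g_1. -/
def aa {n : ℕ} (g : Fin (n + 1) → ℕ) (i : ℕ) : ℕ := (ap g i - ap' g i) / g 0

/-- `bb g i` = b_i = ord(ω_i). -/
def bb {n : ℕ} (g : Fin (n + 1) → ℕ) (i : ℕ) : ℕ := ordS g (ap g i)

/-- The partial order `u ≤_M u'`: there is `s ∈ S` with `u + s = u'` and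
`ord u + ord s = ord u'`. -/
def leM {n : ℕ} (g : Fin (n + 1) → ℕ) (u v : ℕ) : Prop :=
  ∃ s ∈ S g, u + s = v ∧ ordS g u + ordS g s = ordS g v

/-- `maxAp_M(S)`: the maximal elements of the Apery set w.r.t. `≤_M`. -/
def maxAp {n : ℕ} (g : Fin (n + 1) → ℕ) : Set ℕ :=
  {u | u ∈ apSet g ∧ ∀ v ∈ apSet g, leM g u v → v = u}

/-- `S` is `M`-pure: all elements of `maxAp_M(S)` have the same order. -/
def MPure {n : ℕ} (g : Fin (n + 1) → ℕ) : Prop :=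
  ∀ u ∈ maxAp g, ∀ v ∈ maxAp g, ordS g u = ordS g v

/-- `S` viewed inside `ℤ`. -/
def SZ {n : ℕ} (g : Fin (n + 1) → ℕ) : Set ℤ := {x | ∃ s ∈ S g, (s : ℤ) = x}

/-- The Frobenius number `g(S) = max (ℤ \ S)`. -/
def frob {n : ℕ} (g : Fin (n + 1) → ℕ) : ℤ := sSup {x : ℤ | x ∉ SZ g}

/-- `S` is symmetric: for every `x ∈ ℤ`, `x ∉ S` implies `g(S) - x ∈ S`. -/
def IsSymm {n : ℕ} (g : Fin (n + 1) → ℕ) : Prop :=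
  ∀ x : ℤ, x ∉ SZ g → frob g - x ∈ SZ g

/-- Hypotheses: `g 0 < g 1 < ⋯ < g n` is a minimal system of generators with
gcd 1, so `S` is a numerical semigroup minimally generated by the `g i`. -/
structure MinGen {n : ℕ} (g : Fin (n + 1) → ℕ) : Prop where
  smono : StrictMono g
  minimal : ∀ i, g i ∉ AddSubmonoid.closure (Set.range g \ {g i})
  gcdeq : Finset.univ.gcd g = 1

variable (k : Type*) [Field k] {n : ℕ} (g : Fin (n + 1) → ℕ)

/-- `R = k[[t^S]]`: the subalgebra of `k[[t]]` of power series supported in `S`. -/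
def Rsub : Subalgebra k (PowerSeries k) where
  carrier := {f | ∀ i, PowerSeries.coeff (R := k) i f ≠ 0 → i ∈ S g}
  zero_mem' := by intro i hi; simp at hi
  one_mem' := by
    intro i hi
    by_cases h : i = 0
    · exact h ▸ (S g).zero_mem
    · rw [PowerSeries.coeff_one, if_neg h] at hi; exact absurd rfl hi
  add_mem' := by
    intro a b ha hb i hi
    rw [map_add] at hi
    by_cases h : PowerSeries.coeff (R := k) i a ≠ 0
    · exact ha i h
    · push_neg at h
      rw [h, zero_add] at hi
      exact hb i hi
  mul_mem' := by
    intro a b ha hb i hi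
    rw [PowerSeries.coeff_mul] at hi
    obtain ⟨p, hp, hne⟩ := Finset.exists_ne_zero_of_sum_ne_zero hi
    have h1 := ha p.1 (left_ne_zero_of_mul hne)
    have h2 := hb p.2 (right_ne_zero_of_mul hne)
    exact (Finset.HasAntidiagonal.mem_antidiagonal.mp hp) ▸ add_mem h1 h2
  algebraMap_mem' := by
    intro r i hi
    by_cases h : i = 0
    · exact h ▸ (S g).zero_mem
    · exfalso
      apply hi
      have : (algebraMap k (PowerSeries k)) r = PowerSeries.C (R := k) r := rfl
      rw [this, PowerSeries.coeff_C, if_neg h]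

open Classical in
/-- `t^s` as an element of `R` (defined to be `0` if `s ∉ S`). -/
def tR (s : ℕ) : Rsub k g :=
  if h : s ∈ S g then
    ⟨PowerSeries.monomial (R := k) s 1, by
      intro i hi
      rw [PowerSeries.coeff_monomial] at hi
      split at hi
      · next heq => exact heq ▸ h
      · exact absurd rfl hi⟩
  else 0

/-- `m = (t^{g_1}, …, t^{g_n})`, the maximal ideal of `R`. -/
def mI : Ideal (Rsub k g) := Ideal.span (Set.range fun i => tR k g (g i))

lemma tR_mul {s u : ℕ} (hs : s ∈ S g) (hu : u ∈ S g) :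
    tR k g (s + u) = tR k g s * tR k g u := by
  simp only [tR, dif_pos hs, dif_pos hu, dif_pos (add_mem hs hu)]
  apply Subtype.ext
  simp only [MulMemClass.coe_mul]
  show (PowerSeries.monomial (R := k) (s + u)) (1 : k) =
    (PowerSeries.monomial (R := k) s) 1 * (PowerSeries.monomial (R := k) u) 1
  rw [← PowerSeries.X_pow_eq, ← PowerSeries.X_pow_eq, ← PowerSeries.X_pow_eq, pow_add]

lemma setM_subset : ∀ h : ℕ, setM g h ⊆ (S g : Set ℕ) := by
  intro h
  induction h with
  | zero => exact fun s hs => hs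
  | succ h ih =>
    rintro s ⟨u, hu, v, hv, huv⟩
    have : u + v = s := huv
    exact this ▸ add_mem hu.1 (ih hv)

lemma le_of_mem_setM : ∀ h : ℕ, ∀ s ∈ setM g h, h ≤ s := by
  intro h
  induction h with
  | zero => exact fun s _ => Nat.zero_le s
  | succ h ih =>
    rintro s ⟨u, hu, v, hv, huv⟩
    have hsum : u + v = s := huv
    have h1 : 1 ≤ u := Nat.one_le_iff_ne_zero.mpr hu.2
    have h2 := ih v hv
    omega

lemma tR_mem_mI {u : ℕ} (hu : u ∈ S g) (hne : u ≠ 0) : tR k g u ∈ mI k g := by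
  have key : ∀ (x : ℕ) (_ : x ∈ S g), x = 0 ∨ tR k g x ∈ mI k g := by
    intro x hx
    induction hx using AddSubmonoid.closure_induction with
    | mem y hy =>
      obtain ⟨i, rfl⟩ := hy
      exact Or.inr (Ideal.subset_span ⟨i, rfl⟩)
    | zero => exact Or.inl rfl
    | add x y hx hy px py =>
      rcases px with rfl | px
      · rcases py with rfl | py
        · exact Or.inl rfl
        · exact Or.inr (by rwa [zero_add])
      · refine Or.inr ?_
        rw [tR_mul k g hx hy]
        exact Ideal.mul_mem_right _ _ px
  rcases key u hu with rfl | h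
  · exact absurd rfl hne
  · exact h

lemma tR_mem_pow_of_setM : ∀ h : ℕ, ∀ s ∈ setM g h, tR k g s ∈ (mI k g) ^ h := by
  intro h
  induction h with
  | zero =>
    intro s _
    rw [pow_zero, Ideal.one_eq_top]
    exact Submodule.mem_top
  | succ h ih =>
    rintro s ⟨u, hu, v, hv, huv⟩
    have hsum : u + v = s := huv
    rw [← hsum, tR_mul k g hu.1 (setM_subset g h hv), pow_succ, mul_comm (tR k g u)]
    exact Ideal.mul_mem_mul (ih v hv) (tR_mem_mI k g hu.1 hu.2)

lemma mem_setM_ordS {s : ℕ} (hs : s ∈ S g) : s ∈ setM g (ordS g s) := by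
  have : ordS g s ∈ {h | s ∈ setM g h} :=
    Nat.sSup_mem (⟨0, hs⟩ : Set.Nonempty {h | s ∈ setM g h})
      ⟨s, fun h hh => le_of_mem_setM g h s hh⟩
  exact this

lemma tR_mem_pow (s : ℕ) : tR k g s ∈ (mI k g) ^ (ordS g s) := by
  by_cases hs : s ∈ S g
  · exact tR_mem_pow_of_setM k g _ s (mem_setM_ordS g hs)
  · rw [tR, dif_neg hs]
    exact zero_mem _

/-- `G(m) = ⊕_{h ≥ 0} m^h/m^{h+1}`, realized as the Rees algebra `R[mt]`
modulo the extension of `m` (the standard presentation of the associated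
graded ring of a local ring). -/
abbrev grG : Type _ :=
  (reesAlgebra (mI k g)) ⧸
    (Ideal.map (algebraMap (Rsub k g) (reesAlgebra (mI k g))) (mI k g))

/-- The homogeneous maximal ideal `𝓜 = m/m² ⊕ m²/m³ ⊕ ⋯` of `G(m)`: the image
of the ideal of elements of the Rees algebra whose degree-0 coefficient lies
in `m`. -/
def MM : Ideal (grG k g) :=
  Ideal.map (Ideal.Quotient.mk _)
    (Ideal.comap ((Polynomial.evalRingHom (0 : Rsub k g)).comp
      (reesAlgebra (mI k g)).val.toRingHom) (mI k g))

/-- The reduction number `r` of `m`: the least `r` with `m^{r+1} = t^{g_1}·m^r`. -/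
def rnum : ℕ :=
  sInf {j | (mI k g) ^ (j + 1) = Ideal.span {tR k g (g 0)} * (mI k g) ^ j}

/-- The initial form `t^s*` of `t^s` in `G(m)`, i.e. the image of `t^s` in
`m^{ord(s)}/m^{ord(s)+1}` (the degree-`ord(s)` component of `G(m)`). -/
def tstar (s : ℕ) : grG k g :=
  Ideal.Quotient.mk _
    ⟨(Polynomial.monomial (ordS g s)) (tR k g s),
      reesAlgebra.monomial_mem.mpr (tR_mem_pow k g s)⟩

/-- `(0 :_{G(m)} 𝓜^r) = H⁰_𝓜(G(m))`. -/
def annM : Ideal (grG k g) := Submodule.colon ⊥ ((MM k g ^ rnum k g : Ideal (grG k g)) : Set (grG k g))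

/-- `(0 :_{G(m)} 𝓜)`. -/
def ann1 : Ideal (grG k g) := Submodule.colon ⊥ ((MM k g : Ideal (grG k g)) : Set (grG k g))

/-- `G(m)` is Buchsbaum iff `(0 :_{G(m)} 𝓜) = (0 :_{G(m)} 𝓜^r)`. -/
def IsBuchsbaum : Prop := ann1 k g = annM k g

/-- `G(m)` is Cohen-Macaulay iff `(0 :_{G(m)} 𝓜^r) = 0`. -/
def IsCM : Prop := annM k g = ⊥

/-- `l_i = max { l | t^{ω_i + l g_1}* ∈ (0 :_{G(m)} 𝓜^r) }`. -/
def lℓ (i : ℕ) : ℕ := sSup {l | tstar k g (ap g i + l * g 0) ∈ annM k g}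

/-- The length of a `G(m)`-module: the Krull dimension of its lattice of
submodules, i.e. the longest length of a chain of submodules. -/
def lenOf (M : Type*) [AddCommGroup M] [Module (grG k g) M] : WithBot ℕ∞ :=
  Order.krullDim (Submodule (grG k g) M)

/-- The socle `(0 :_{G/ξG} 𝓜) = ((ξ) :_G 𝓜)/(ξ)` of `G(m)/ξ·G(m)`, where
`ξ = t^{g_1}*` is the canonical degree-one homogeneous parameter of `G(m)`. -/
abbrev socQ : Type _ :=
  ↥(Submodule.colon (Ideal.span {tstar k g (g 0)}) ((MM k g : Ideal (grG k g)) : Set (grG k g))) ⧸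
    (Submodule.comap
      (Submodule.colon (Ideal.span {tstar k g (g 0)}) ((MM k g : Ideal (grG k g)) : Set (grG k g))).subtype
      (Ideal.span {tstar k g (g 0)}))

/-- `G(m)` is Gorenstein: Cohen-Macaulay of type 1, i.e. Cohen-Macaulay and
the socle of `G(m)` modulo the homogeneous parameter `ξ = t^{g_1}*` has
length 1 as a `G(m)`-module. -/
def IsGor : Prop := IsCM k g ∧ lenOf k g (socQ k g) = 1


/-!
Every element of `hM` lies in `h g₁ + S'`, so an element `u ∈ hM` in the residue class `i`
modulo `g₁` satisfies `h g₁ + ω'_i ≤ u`. If `t^c*` kills `𝓜^r`, it kills `(t^{g₁}*)^r`, which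
in the Rees-algebra presentation of `G(m)` says `c + r g₁ ∈ (ord c + r + 1)M`. Writing
`c = ω_i + l g₁` and `ω_i = ω'_i + a_i g₁`, the bound gives `ord c + 1 ≤ a_i + l`, while
`ω_i ∈ b_i M` gives `b_i + l ≤ ord c`; hence `b_i < a_i`.
-/

lemma _root_.Nat.exists_eq_add_mul_of_le_of_mod_eq {a b m : ℕ} (hle : a ≤ b)
    (hmod : a % m = b % m) :
    ∃ l, b = a + l * m := by
  obtain ⟨l, hl⟩ := (Nat.modEq_iff_dvd' hle).mp hmod
  exact ⟨l, by rw [mul_comm, ← hl, Nat.add_sub_cancel' hle]⟩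

lemma _root_.PowerSeries.exists_coeff_ne_zero_of_coeff_mul_ne_zero {R : Type*} [Semiring R]
    {f f' : PowerSeries R} {s : ℕ} (h : PowerSeries.coeff s (f * f') ≠ 0) :
    ∃ p q, p + q = s ∧ PowerSeries.coeff p f ≠ 0 ∧ PowerSeries.coeff q f' ≠ 0 := by
  rw [PowerSeries.coeff_mul] at h
  obtain ⟨x, hx, hne⟩ := Finset.exists_ne_zero_of_sum_ne_zero h
  exact ⟨x.1, x.2, Finset.HasAntidiagonal.mem_antidiagonal.mp hx, left_ne_zero_of_mul hne,
    right_ne_zero_of_mul hne⟩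

lemma _root_.reesAlgebra.coeff_mem_pow_succ_of_mem_map {R : Type*} [CommRing R] (I : Ideal R)
    {q : reesAlgebra I} (hq : q ∈ Ideal.map (algebraMap R (reesAlgebra I)) I) (h : ℕ) :
    (q : R[X]).coeff h ∈ I ^ (h + 1) := by
  induction hq using Submodule.span_induction generalizing h with
  | mem x hx =>
    obtain ⟨a, ha, rfl⟩ := hx
    change (C a).coeff h ∈ I ^ (h + 1)
    rw [coeff_C]
    split_ifs with h0
    · simpa [h0] using ha
    · exact zero_mem _
  | zero => simp
  | add x y _ _ hx hy =>
    rw [AddMemClass.coe_add, coeff_add]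
    exact add_mem (hx h) (hy h)
  | smul a x _ hx =>
    rw [smul_eq_mul, MulMemClass.coe_mul, coeff_mul]
    refine Ideal.sum_mem _ fun p hp => ?_
    rw [← Finset.HasAntidiagonal.mem_antidiagonal.mp hp, add_assoc, pow_add]
    exact Ideal.mul_mem_mul ((mem_reesAlgebra_iff I _).mp a.2 p.1) (hx p.2)

section Semigroup

variable {g}

lemma gen_mem_S (i : Fin (n + 1)) : g i ∈ S g :=
  AddSubmonoid.subset_closure ⟨i, rfl⟩

lemma MinGen.gen_zero_pos (hg : MinGen g) : 0 < g 0 :=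
  Nat.pos_of_ne_zero fun h => hg.minimal 0 (by rw [h]; exact zero_mem _)

lemma MinGen.gen_zero_le (hg : MinGen g) (i : Fin (n + 1)) : g 0 ≤ g i :=
  hg.smono.monotone (Fin.zero_le i)

lemma MinGen.S_le_S' (hg : MinGen g) : S g ≤ S' g := by
  rw [S, AddSubmonoid.closure_le]
  rintro _ ⟨i, rfl⟩
  rw [← Nat.sub_add_cancel (hg.gen_zero_le i)]
  exact add_mem (AddSubmonoid.subset_closure (Set.mem_insert_of_mem _ ⟨i, rfl⟩))
    (AddSubmonoid.subset_closure (Set.mem_insert _ _))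

lemma MinGen.exists_eq_gen_zero_add_of_mem_S (hg : MinGen g) {s : ℕ} (hs : s ∈ S g)
    (hs0 : s ≠ 0) : ∃ t ∈ S' g, s = g 0 + t := by
  induction hs using AddSubmonoid.closure_induction with
  | mem x hx =>
    obtain ⟨i, rfl⟩ := hx
    exact ⟨g i - g 0, AddSubmonoid.subset_closure (Set.mem_insert_of_mem _ ⟨i, rfl⟩),
      (Nat.add_sub_cancel' (hg.gen_zero_le i)).symm⟩
  | zero => exact absurd rfl hs0
  | add x y _ hy hx' hy' =>
    rcases Nat.eq_zero_or_pos x with rfl | hx0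
    · simpa using hy' (by simpa using hs0)
    obtain ⟨t, ht, rfl⟩ := hx' hx0.ne'
    exact ⟨t + y, add_mem ht (hg.S_le_S' hy), by ring⟩

lemma MinGen.exists_eq_mul_add_of_mem_setM (hg : MinGen g) {h s : ℕ} (hs : s ∈ setM g h) :
    ∃ t ∈ S' g, s = h * g 0 + t := by
  induction h generalizing s with
  | zero => exact ⟨s, hg.S_le_S' hs, by simp⟩
  | succ h ih =>
    obtain ⟨u, ⟨huS, hu0⟩, v, hv, rfl⟩ := hs
    obtain ⟨t, ht, rfl⟩ := hg.exists_eq_gen_zero_add_of_mem_S huS hu0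
    obtain ⟨t', ht', rfl⟩ := ih hv
    exact ⟨t + t', add_mem ht ht', by ring⟩

lemma MinGen.mul_add_ap'_le_of_mem_setM (hg : MinGen g) {h u : ℕ} (hu : u ∈ setM g h) :
    h * g 0 + ap' g (u % g 0) ≤ u := by
  obtain ⟨t, ht, rfl⟩ := hg.exists_eq_mul_add_of_mem_setM hu
  have hmod : t % g 0 = (h * g 0 + t) % g 0 := by simp
  exact Nat.add_le_add_left (show ap' g _ ≤ t from Nat.sInf_le ⟨ht, hmod⟩) _

lemma MinGen.add_mul_mem_setM (hg : MinGen g) {s h : ℕ} (hs : s ∈ setM g h) (l : ℕ) :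
    s + l * g 0 ∈ setM g (h + l) := by
  induction l with
  | zero => simpa using hs
  | succ l ih =>
    rw [← add_assoc, show s + (l + 1) * g 0 = g 0 + (s + l * g 0) by ring]
    exact ⟨g 0, ⟨gen_mem_S 0, hg.gen_zero_pos.ne'⟩, _, ih, rfl⟩

lemma mul_mem_S {u : ℕ} (hu : u ∈ S g) (r : ℕ) : r * u ∈ S g := by
  simpa using nsmul_mem hu r

lemma le_ordS_of_mem_setM {s h : ℕ} (hs : s ∈ setM g h) : h ≤ ordS g s :=
  le_csSup ⟨s, fun _ hb => le_of_mem_setM g _ s hb⟩ hs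

lemma ap_mem {s : ℕ} (hs : s ∈ S g) :
    ap g (s % g 0) ∈ S g ∧ ap g (s % g 0) % g 0 = s % g 0 :=
  Nat.sInf_mem (s := {u | u ∈ S g ∧ u % g 0 = s % g 0}) ⟨s, hs, rfl⟩

lemma exists_eq_ap_add_mul {s : ℕ} (hs : s ∈ S g) : ∃ l, s = ap g (s % g 0) + l * g 0 :=
  Nat.exists_eq_add_mul_of_le_of_mod_eq (show ap g (s % g 0) ≤ s from Nat.sInf_le ⟨hs, rfl⟩)
    (ap_mem hs).2

lemma MinGen.ap_eq_ap'_add_aa_mul (hg : MinGen g) {s : ℕ} (hs : s ∈ S g) :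
    ap g (s % g 0) = ap' g (s % g 0) + aa g (s % g 0) * g 0 := by
  obtain ⟨hapS, hapmod⟩ := ap_mem hs
  have hap'S : ap' g (s % g 0) ∈ S' g ∧ ap' g (s % g 0) % g 0 = s % g 0 :=
    Nat.sInf_mem (s := {u | u ∈ S' g ∧ u % g 0 = s % g 0}) ⟨_, hg.S_le_S' hapS, hapmod⟩
  have hle : ap' g (s % g 0) ≤ ap g (s % g 0) := Nat.sInf_le ⟨hg.S_le_S' hapS, hapmod⟩
  obtain ⟨l, hl⟩ := Nat.exists_eq_add_mul_of_le_of_mod_eq hle (hap'S.2.trans hapmod.symm)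
  rw [aa, hl, Nat.add_sub_cancel_left, Nat.mul_div_cancel _ hg.gen_zero_pos]

lemma MinGen.bb_lt_aa_of_add_mul_mem_setM (hg : MinGen g) {c r : ℕ} (hc : c ∈ S g)
    (hv : c + r * g 0 ∈ setM g (ordS g c + r + 1)) : bb g (c % g 0) < aa g (c % g 0) := by
  obtain ⟨l, hl⟩ := exists_eq_ap_add_mul hc
  have hord : bb g (c % g 0) + l ≤ ordS g c := by
    have hmem := hg.add_mul_mem_setM (mem_setM_ordS g (ap_mem hc).1) l
    rw [← hl] at hmem
    exact le_ordS_of_mem_setM hmem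
  have hbound := hg.mul_add_ap'_le_of_mem_setM hv
  rw [Nat.add_mul_mod_self_right] at hbound
  have hap := hg.ap_eq_ap'_add_aa_mul hc
  have hmul : (ordS g c + r + 1) * g 0 ≤ (aa g (c % g 0) + l + r) * g 0 := by linarith
  have := Nat.le_of_mul_le_mul_right hmul hg.gen_zero_pos
  omega

end Semigroup

section GradedRing

variable {g}

lemma coe_tR {s : ℕ} (hs : s ∈ S g) :
    (tR k g s : PowerSeries k) = PowerSeries.monomial s 1 := by
  rw [tR, dif_pos hs]

lemma tR_zero : tR k g 0 = 1 :=
  Subtype.ext (by simp [coe_tR k (zero_mem _)])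

lemma tR_pow {u : ℕ} (hu : u ∈ S g) (r : ℕ) : tR k g u ^ r = tR k g (r * u) := by
  induction r with
  | zero => simp [tR_zero]
  | succ r ih =>
    rw [pow_succ, ih, ← tR_mul k g (mul_mem_S hu r) hu, add_one_mul]

lemma tstar_eq_zero_of_notMem {s : ℕ} (hs : s ∉ S g) : tstar k g s = 0 := by
  have h0 : (⟨monomial (ordS g s) (tR k g s), reesAlgebra.monomial_mem.mpr (tR_mem_pow k g s)⟩ :
      reesAlgebra (mI k g)) = 0 :=
    Subtype.ext (show monomial (ordS g s) (tR k g s) = 0 by rw [tR, dif_neg hs, map_zero])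
  rw [tstar, h0, map_zero]

lemma MinGen.constantCoeff_eq_zero_of_mem_mI (hg : MinGen g) {f : Rsub k g} (hf : f ∈ mI k g) :
    PowerSeries.constantCoeff (f : PowerSeries k) = 0 := by
  suffices mI k g ≤ RingHom.ker (PowerSeries.constantCoeff.comp (Rsub k g).val.toRingHom) from
    this hf
  rw [mI, Ideal.span_le]
  rintro _ ⟨i, rfl⟩
  have hi : g i ≠ 0 := (hg.gen_zero_pos.trans_le (hg.gen_zero_le i)).ne'
  simp [coe_tR k (gen_mem_S i), ← PowerSeries.coeff_zero_eq_constantCoeff_apply,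
    PowerSeries.coeff_monomial, hi.symm]

lemma MinGen.mem_setM_of_coeff_ne_zero_of_mem_pow (hg : MinGen g) {j : ℕ} {f : Rsub k g}
    (hf : f ∈ mI k g ^ j) {s : ℕ} (hs : PowerSeries.coeff s (f : PowerSeries k) ≠ 0) :
    s ∈ setM g j := by
  induction j generalizing f s with
  | zero => exact f.2 s hs
  | succ j ih =>
    rw [pow_succ] at hf
    revert s
    induction hf using Submodule.mul_induction_on' with
    | mem_mul_mem a ha b hb =>
      intro s hs
      obtain ⟨p, q, rfl, hp, hq⟩ :=
        PowerSeries.exists_coeff_ne_zero_of_coeff_mul_ne_zero (by simpa using hs)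
      have hq0 : q ≠ 0 := by
        rintro rfl
        exact hq (by simpa using hg.constantCoeff_eq_zero_of_mem_mI k hb)
      exact ⟨q, ⟨b.2 q hq, hq0⟩, p, ih ha hp, add_comm q p⟩
    | add x _ y _ hx hy =>
      intro s hs
      rw [AddMemClass.coe_add, map_add] at hs
      by_cases hxs : PowerSeries.coeff s (x : PowerSeries k) = 0
      · exact hy (by simpa [hxs] using hs)
      · exact hx hxs

lemma MinGen.mem_setM_of_tR_mem_pow (hg : MinGen g) {s j : ℕ} (hs : s ∈ S g)
    (h : tR k g s ∈ mI k g ^ j) : s ∈ setM g j :=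
  hg.mem_setM_of_coeff_ne_zero_of_mem_pow k h (by simp [coe_tR k hs])

lemma MinGen.add_mul_mem_setM_of_tstar_mem_annM (hg : MinGen g) {c : ℕ} (hcS : c ∈ S g)
    (hc : tstar k g c ∈ annM k g) :
    c + rnum k g * g 0 ∈ setM g (ordS g c + rnum k g + 1) := by
  set r := rnum k g
  have hg0 : g 0 ∈ S g := gen_mem_S 0
  let ξ : reesAlgebra (mI k g) := ⟨monomial 1 (tR k g (g 0)), reesAlgebra.monomial_mem.mpr
    (by simpa using tR_mem_mI k g hg0 hg.gen_zero_pos.ne')⟩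
  let τ : reesAlgebra (mI k g) := ⟨monomial (ordS g c) (tR k g c),
    reesAlgebra.monomial_mem.mpr (tR_mem_pow k g c)⟩
  have hξ : Ideal.Quotient.mk _ ξ ∈ MM k g :=
    Ideal.mem_map_of_mem _ (by simp [ξ])
  have hkill :
      τ * ξ ^ r ∈ Ideal.map (algebraMap (Rsub k g) (reesAlgebra (mI k g))) (mI k g) := by
    rw [← Ideal.Quotient.eq_zero_iff_mem, map_mul, map_pow]
    exact (Submodule.mem_bot _).mp (Submodule.mem_colon.mp hc _ (Ideal.pow_mem_pow hξ r))
  have hcoe : ((τ * ξ ^ r : reesAlgebra (mI k g)) : (Rsub k g)[X]) =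
      monomial (ordS g c + r) (tR k g (c + r * g 0)) := by
    rw [MulMemClass.coe_mul, SubmonoidClass.coe_pow, monomial_pow, monomial_mul_monomial,
      tR_pow k hg0, ← tR_mul k g hcS (mul_mem_S hg0 r), one_mul]
  have hcoeff := reesAlgebra.coeff_mem_pow_succ_of_mem_map _ hkill (ordS g c + r)
  rw [hcoe, coeff_monomial_same] at hcoeff
  exact hg.mem_setM_of_tR_mem_pow k (add_mem hcS (mul_mem_S hg0 r)) hcoeff

end GradedRing

theorem statement1_general {k : Type*} [Field k] {n : ℕ} (g : Fin (n + 1) → ℕ)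
    (hg : MinGen g) (c : ℕ) (hne : tstar k g c ≠ 0) (hc : tstar k g c ∈ annM k g) :
    ∃ i l : ℕ, i < g 0 ∧ bb g i < aa g i ∧ c = ap g i + l * g 0 := by
  have hcS : c ∈ S g := by
    by_contra hcS
    exact hne (tstar_eq_zero_of_notMem k hcS)
  obtain ⟨l, hl⟩ := exists_eq_ap_add_mul hcS
  exact ⟨c % g 0, l, Nat.mod_lt _ hg.gen_zero_pos,
    hg.bb_lt_aa_of_add_mul_mem_setM hcS (hg.add_mul_mem_setM_of_tstar_mem_annM k hcS hc), hl⟩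

/-- Lemma 2b. Every nonzero monomial element `t^c*` of `G(m)`
lying in `(0 :_{G(m)} 𝓜^r)` has exponent of the form `c = ω_i + l g_1` for some
index `i` with `a_i > b_i` and some integer `l ≥ 0`. -/
theorem statement1 {k : Type*} [Field k] [Infinite k] {n : ℕ} (g : Fin (n + 1) → ℕ)
    (hg : MinGen g) (c : ℕ) (hne : tstar k g c ≠ 0) (hc : tstar k g c ∈ annM k g) :
    ∃ i l : ℕ, i < g 0 ∧ bb g i < aa g i ∧ c = ap g i + l * g 0 :=
  statement1_general g hg c hne hc

end NumSgrp
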